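/- Let g, h : F(Σ) → F(Δ) be injective homomorphisms of free groups. Then SD(g,h) = SD(h,g) if and only if the endomorphism φ_{(g,h)} : x ↦ h⁻¹(g(x)) of SD(g,h) is an automorphism of SD(g,h) and the endomorphism φ_{(h,g)} : x ↦ g⁻¹(h(x)) of SD(h,g) is an automorphism of SD(h,g). -/

import Mathlib

/-!
`SD(g,h)` is the largest subgroup `K` with `g(K) ≤ h(K)`. If `SD(g,h) = SD(h,g) = S`, then both
`g(S) ≤ h(S)` and `h(S) ≤ g(S)`, and conversely `g(K) = h(K)` puts `K` below both stable domains.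
For injective `g, h`, the condition `g(K) = h(K)` says exactly that `h⁻¹ ∘ g` is an automorphism of `K`.
-/

/-- The descending chain in the definition of the stable domain. -/
def SDChain {α β : Type} (g h : FreeGroup α →* FreeGroup β) : ℕ → Subgroup (FreeGroup α)
  | 0 => ⊤
  | i + 1 =>
      Subgroup.comap g (Subgroup.map g (SDChain g h i) ⊓ Subgroup.map h (SDChain g h i))

/-- The stable domain `SD(g,h)`. -/
def SD {α β : Type} (g h : FreeGroup α →* FreeGroup β) : Subgroup (FreeGroup α) :=
  ⨅ i, SDChain g h i

section MulEquiv

variable {G H : Type*} [Group G] [Group H]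

theorem exists_mulEquiv_comp_eq_iff_map_eq {g h : G →* H} (hg : Function.Injective g)
    (hh : Function.Injective h) (K : Subgroup G) :
    (∃ φ : K ≃* K, ∀ x : K, h (φ x : G) = g x) ↔ K.map g = K.map h := by
  constructor
  · rintro ⟨φ, hφ⟩
    apply le_antisymm
    · rintro _ ⟨x, hx, rfl⟩
      exact ⟨φ ⟨x, hx⟩, (φ ⟨x, hx⟩).2, hφ ⟨x, hx⟩⟩
    · rintro _ ⟨x, hx, rfl⟩
      obtain ⟨y, hy⟩ := φ.surjective ⟨x, hx⟩
      exact ⟨y, y.2, by rw [← hφ y, hy]⟩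
  · intro heq
    refine ⟨(K.equivMapOfInjective g hg).trans
      ((MulEquiv.subgroupCongr heq).trans (K.equivMapOfInjective h hh).symm), fun x => ?_⟩
    have key := congrArg Subtype.val ((K.equivMapOfInjective h hh).apply_symm_apply
      (MulEquiv.subgroupCongr heq (K.equivMapOfInjective g hg x)))
    simpa only [MulEquiv.trans_apply, MulEquiv.subgroupCongr_apply,
      Subgroup.coe_equivMapOfInjective_apply] using key

end MulEquiv

namespace SD

variable {α β : Type} (g h : FreeGroup α →* FreeGroup β)

theorem mem_SDChain_succ {i : ℕ} {x : FreeGroup α} :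
    x ∈ SDChain g h (i + 1) ↔
      g x ∈ (SDChain g h i).map g ∧ g x ∈ (SDChain g h i).map h :=
  Iff.rfl

theorem map_le_map (hh : Function.Injective h) : (SD g h).map g ≤ (SD g h).map h := by
  rintro _ ⟨x, hx, rfl⟩
  rw [SD, Subgroup.map_iInf h hh, Subgroup.mem_iInf]
  intro i
  exact ((mem_SDChain_succ g h).1 (Subgroup.mem_iInf.1 hx (i + 1))).2

theorem le_of_map_le_map {K : Subgroup (FreeGroup α)} (hK : K.map g ≤ K.map h) : K ≤ SD g h := by
  refine le_iInf fun i => ?_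
  induction i with
  | zero => exact le_top
  | succ i ih =>
    intro x hx
    exact (mem_SDChain_succ g h).2
      ⟨Subgroup.mem_map_of_mem g (ih hx), Subgroup.map_mono ih (hK (Subgroup.mem_map_of_mem g hx))⟩

theorem eq_swap_iff (hg : Function.Injective g) (hh : Function.Injective h) :
    SD g h = SD h g ↔ (SD g h).map g = (SD g h).map h ∧ (SD h g).map h = (SD h g).map g := by
  constructor
  · intro hSD
    have hle : (SD g h).map h ≤ (SD g h).map g := hSD ▸ map_le_map h g hg
    have heq : (SD g h).map g = (SD g h).map h := le_antisymm (map_le_map g h hh) hle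
    exact ⟨heq, hSD ▸ heq.symm⟩
  · rintro ⟨hgh, hhg⟩
    exact le_antisymm (le_of_map_le_map h g hgh.ge) (le_of_map_le_map g h hhg.ge)

end SD

/-- for injective `g, h`, `SD(g,h) = SD(h,g)` iff the endomorphism
`φ_{(g,h)} : x ↦ h⁻¹(g x)` of `SD(g,h)` is an automorphism and the endomorphism
`φ_{(h,g)} : x ↦ g⁻¹(h x)` of `SD(h,g)` is an automorphism. (An automorphism agreeing
with `x ↦ h⁻¹(g x)` is expressed as a `MulEquiv` `φ` with `h (φ x) = g x`.) -/
theorem stmt_17 {α β : Type} (g h : FreeGroup α →* FreeGroup β)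
    (hg : Function.Injective g) (hh : Function.Injective h) :
    SD g h = SD h g ↔
      ((∃ φ : ↥(SD g h) ≃* ↥(SD g h),
          ∀ x : ↥(SD g h), h ((φ x : ↥(SD g h)) : FreeGroup α) = g (x : FreeGroup α)) ∧
       (∃ ψ : ↥(SD h g) ≃* ↥(SD h g),
          ∀ x : ↥(SD h g), g ((ψ x : ↥(SD h g)) : FreeGroup α) = h (x : FreeGroup α))) := by
  rw [SD.eq_swap_iff g h hg hh, exists_mulEquiv_comp_eq_iff_map_eq hg hh,
    exists_mulEquiv_comp_eq_iff_map_eq hh hg]
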